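/- Let a_1,...,a_{m-1} be positive integers with sum S, let c > S − 1 with cS even, and set T = ⌈(1 + c(S+2)) / (S² + S − 1)⌉ − 1. Then the 2-colouring Δ of {1,...,T} with Δ(x) = 0 for x ∈ (max{0, S²T − c(S+1)}, ST − c] and Δ(x) = 1 otherwise admits no monochromatic solution to a_1 x_1 + ... + a_{m-1} x_{m-1} − x_m = c. Consequently Rad_2(a_1,...,a_{m-1},−1; c) ≥ T + 1 = ⌈(1 + c(S+2)) / (S² + S − 1)⌉. -/
import Mathlib


/-- `χ` admits a monochromatic solution of `a₁x₁ + ⋯ + a_{m-1}x_{m-1} - x_m = c`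
with all variables in `{1,…,N}`. -/
def MonoSoln {k : ℕ} (a : Fin k → ℕ) (c : ℤ) (r : ℕ) (N : ℕ) (χ : ℤ → Fin r) : Prop :=
  ∃ (x : Fin k → ℤ) (y : ℤ),
    (∀ i, x i ∈ Finset.Icc (1 : ℤ) N) ∧ y ∈ Finset.Icc (1 : ℤ) N ∧
    ((∑ i, (a i : ℤ) * x i) - y = c) ∧ (∀ i, χ (x i) = χ y)

/-- `R` is the `r`-colour Rado number of `a₁x₁ + ⋯ + a_{m-1}x_{m-1} - x_m = c`. -/
def IsRado {k : ℕ} (a : Fin k → ℕ) (c : ℤ) (r : ℕ) (R : ℕ) : Prop :=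
  IsLeast {N : ℕ | ∀ χ : ℤ → Fin r, MonoSoln a c r N χ} R

/-- The lower-bound colouring for large `c`: `0` on `(max 0 (S²T - c(S+1)), ST - c]`
and `1` otherwise. -/
def Δ₁₈ (S c T : ℤ) : ℤ → Fin 2 := fun x =>
  if max 0 (S ^ 2 * T - c * (S + 1)) < x ∧ x ≤ S * T - c then 0 else 1

set_option maxHeartbeats 1000000 in
theorem rado_lower_large_c (k : ℕ) (hk : 0 < k) (a : Fin k → ℕ) (hpos : ∀ i, 0 < a i)
    (S c T : ℤ) (hS : S = ∑ i, (a i : ℤ)) (hc : (S : ℤ) - 1 < c) (he : Even (c * S))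
    (hT : T = ⌈((1 + c * (S + 2) : ℤ) : ℚ) / ((S ^ 2 + S - 1 : ℤ) : ℚ)⌉ - 1) :
    (¬ ∃ (x : Fin k → ℤ) (y : ℤ),
        (∀ i, x i ∈ Finset.Icc (1 : ℤ) T) ∧ y ∈ Finset.Icc (1 : ℤ) T ∧
        ((∑ i, (a i : ℤ) * x i) - y = c) ∧
        (∀ i, Δ₁₈ S c T (x i) = Δ₁₈ S c T y)) ∧
    (∀ R : ℕ, IsRado a c 2 R → T + 1 ≤ (R : ℤ)) := by
  have hS1 : (1 : ℤ) ≤ S := by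
    have h1 : (k : ℤ) ≤ ∑ i : Fin k, (a i : ℤ) := by
      calc (k : ℤ) = ∑ _i : Fin k, (1 : ℤ) := by simp
        _ ≤ ∑ i : Fin k, (a i : ℤ) :=
          Finset.sum_le_sum fun i _ => by exact_mod_cast hpos i
    have hk1 : (1 : ℤ) ≤ (k : ℤ) := by exact_mod_cast hk
    rw [hS]; linarith
  have hc0 : (0 : ℤ) ≤ c := by linarith
  have hD : (0 : ℤ) < S ^ 2 + S - 1 := by nlinarith
  have hkey : (S ^ 2 + S - 1) * T ≤ c * (S + 2) := by
    have hq : (T : ℚ) < ((1 + c * (S + 2) : ℤ) : ℚ) / ((S ^ 2 + S - 1 : ℤ) : ℚ) := by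
      rw [hT]
      have := Int.ceil_lt_add_one (((1 + c * (S + 2) : ℤ) : ℚ) / ((S ^ 2 + S - 1 : ℤ) : ℚ))
      push_cast
      push_cast at this
      linarith
    have hDq : (0 : ℚ) < ((S ^ 2 + S - 1 : ℤ) : ℚ) := by exact_mod_cast hD
    rw [lt_div_iff₀ hDq] at hq
    have h2 : T * (S ^ 2 + S - 1) < 1 + c * (S + 2) := by exact_mod_cast hq
    nlinarith [h2]
  have hΔ0 : ∀ v : ℤ, Δ₁₈ S c T v = 0 ↔
      (max 0 (S ^ 2 * T - c * (S + 1)) < v ∧ v ≤ S * T - c) := by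
    intro v
    unfold Δ₁₈
    split_ifs with h
    · simpa using h
    · simpa using h
  set M : ℤ := max 0 (S ^ 2 * T - c * (S + 1)) with hM
  have hMge : S ^ 2 * T - c * (S + 1) ≤ M := le_max_right _ _
  have h1 : ¬ ∃ (x : Fin k → ℤ) (y : ℤ),
      (∀ i, x i ∈ Finset.Icc (1 : ℤ) T) ∧ y ∈ Finset.Icc (1 : ℤ) T ∧
      ((∑ i, (a i : ℤ) * x i) - y = c) ∧
      (∀ i, Δ₁₈ S c T (x i) = Δ₁₈ S c T y) := by
    rintro ⟨x, y, hx, hy, heq, hcol⟩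
    simp only [Finset.mem_Icc] at hx hy
    by_cases hy0 : M < y ∧ y ≤ S * T - c
    · -- colour 0 case
      have hx0 : ∀ i, M < x i ∧ x i ≤ S * T - c := by
        intro i
        rw [← hΔ0]
        rw [hcol i, hΔ0]
        exact hy0
      have hsum : ∑ i, (a i : ℤ) * x i ≤ S * (S * T - c) :=
        calc ∑ i, (a i : ℤ) * x i ≤ ∑ i, (a i : ℤ) * (S * T - c) :=
              Finset.sum_le_sum fun i _ =>
                mul_le_mul_of_nonneg_left (hx0 i).2 (by positivity)
          _ = S * (S * T - c) := by rw [← Finset.sum_mul, ← hS]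
      nlinarith [hy0.1, hMge, hsum, heq]
    · -- colour 1 case
      have hx1 : ∀ i, ¬ (M < x i ∧ x i ≤ S * T - c) := by
        intro i hcon
        have h2 : Δ₁₈ S c T (x i) = 0 := (hΔ0 (x i)).mpr hcon
        rw [hcol i, hΔ0] at h2
        exact hy0 h2
      have hST : ∑ i, (a i : ℤ) * x i ≤ S * T :=
        calc ∑ i, (a i : ℤ) * x i ≤ ∑ i, (a i : ℤ) * T :=
              Finset.sum_le_sum fun i _ =>
                mul_le_mul_of_nonneg_left (hx i).2 (by positivity)
          _ = S * T := by rw [← Finset.sum_mul, ← hS]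
      rcases lt_or_ge (S * T - c) y with hyH | hyL
      · linarith [hST, heq, hyH]
      · have hyM : y ≤ M := by
          by_contra h'
          push_neg at h'
          exact hy0 ⟨h', hyL⟩
        have hM1 : (1 : ℤ) ≤ M := le_trans hy.1 hyM
        have hMe : M = S ^ 2 * T - c * (S + 1) := by
          rcases max_choice 0 (S ^ 2 * T - c * (S + 1)) with h | h
          · exfalso; rw [hM] at hM1; rw [h] at hM1; norm_num at hM1
          · rw [hM, h]
        classical
        set H : Finset (Fin k) := Finset.univ.filter (fun i => S * T - c < x i) with hH
        set Hc : Finset (Fin k) :=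
          Finset.univ.filter (fun i => ¬ (S * T - c < x i)) with hHc
        set A : ℤ := ∑ i ∈ H, (a i : ℤ) with hA
        set B : ℤ := ∑ i ∈ Hc, (a i : ℤ) with hB
        have hAB : A + B = S := by
          rw [hA, hB, hS, hH, hHc, Finset.sum_filter_add_sum_filter_not]
        have hA0 : (0 : ℤ) ≤ A :=
          Finset.sum_nonneg fun i _ => by positivity
        have hB0 : (0 : ℤ) ≤ B :=
          Finset.sum_nonneg fun i _ => by positivity
        have hsplit : ∑ i ∈ H, (a i : ℤ) * x i + ∑ i ∈ Hc, (a i : ℤ) * x i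
            = ∑ i, (a i : ℤ) * x i := by
          rw [hH, hHc, Finset.sum_filter_add_sum_filter_not]
        have hupH : ∑ i ∈ H, (a i : ℤ) * x i ≤ A * T := by
          rw [hA, Finset.sum_mul]
          exact Finset.sum_le_sum fun i _ =>
            mul_le_mul_of_nonneg_left (hx i).2 (by positivity)
        have hupL : ∑ i ∈ Hc, (a i : ℤ) * x i ≤ B * M := by
          rw [hB, Finset.sum_mul]
          refine Finset.sum_le_sum fun i hi => ?_
          have hi' : ¬ (S * T - c < x i) := by
            rw [hHc] at hi
            simpa using (Finset.mem_filter.mp hi).2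
          have hxiM : x i ≤ M := by
            by_contra h'
            push_neg at h'
            exact hx1 i ⟨h', not_lt.mp hi'⟩
          exact mul_le_mul_of_nonneg_left hxiM (by positivity)
        have hloH : A * (S * T - c + 1) ≤ ∑ i ∈ H, (a i : ℤ) * x i := by
          rw [hA, Finset.sum_mul]
          refine Finset.sum_le_sum fun i hi => ?_
          have hi' : S * T - c < x i := by
            rw [hH] at hi
            simpa using (Finset.mem_filter.mp hi).2
          exact mul_le_mul_of_nonneg_left hi' (by positivity)
        have hloL : B ≤ ∑ i ∈ Hc, (a i : ℤ) * x i := by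
          rw [hB]
          refine Finset.sum_le_sum fun i _ => ?_
          nlinarith [(hx i).1, (by positivity : (0:ℤ) ≤ (a i : ℤ)),
            (by exact_mod_cast hpos i : (1:ℤ) ≤ (a i : ℤ))]
        rcases eq_or_lt_of_le hB0 with hBz | hB1
        · -- B = 0, A = S
          have hAS : A = S := by linarith
          nlinarith [hloH, hloL, hsplit, heq, hyM, hMe, hAS, hS1, hBz]
        · -- 1 ≤ B, A ≤ S - 1
          have hA1 : A ≤ S - 1 := by linarith
          have hABM : A * T + B * M ≤ c := by
            rcases le_or_gt M T with hMT | hTM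
            · nlinarith [mul_le_mul_of_nonneg_right hA1 (sub_nonneg.mpr hMT),
                hkey, hMe, hAB]
            · have hSM : S * M ≤ c := by
                nlinarith [mul_le_mul_of_nonneg_left hkey
                    (by positivity : (0:ℤ) ≤ S ^ 3),
                  mul_nonneg hc0 (by nlinarith : (0:ℤ) ≤ S ^ 2 - 1), hD, hMe]
              nlinarith [mul_nonneg hA0 (by linarith : (0:ℤ) ≤ M - T), hAB, hSM]
          linarith [hupH, hupL, hsplit, heq, hy.1, hABM]
  refine ⟨h1, ?_⟩
  intro R hR
  by_contra hcon
  push_neg at hcon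
  have hRT : (R : ℤ) ≤ T := by linarith
  have h2 : MonoSoln a c 2 R (Δ₁₈ S c T) := hR.1 (Δ₁₈ S c T)
  obtain ⟨x, y, hx, hy, heq, hcol⟩ := h2
  refine h1 ⟨x, y, fun i => ?_, ?_, heq, hcol⟩
  · have := Finset.mem_Icc.mp (hx i)
    exact Finset.mem_Icc.mpr ⟨this.1, le_trans this.2 hRT⟩
  · have := Finset.mem_Icc.mp hy
    exact Finset.mem_Icc.mpr ⟨this.1, le_trans this.2 hRT⟩
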